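/- The Hall algebra multiplication on a finitary abelian category A is associative with unit [0]. -/

import Mathlib

open CategoryTheory CategoryTheory.Limits
open scoped Classical

noncomputable section

attribute [local instance] CategoryTheory.isIsomorphicSetoid

universe v u

variable {C : Type u} [Category.{v} C] [Abelian C]

/-- `f`, `g` form a short exact sequence `0 ⟶ N ⟶ L ⟶ M ⟶ 0`. -/
def IsSES {N L M : C} (f : N ⟶ L) (g : L ⟶ M) : Prop :=
  ∃ w : f ≫ g = 0, (CategoryTheory.ShortComplex.mk f g w).ShortExact

/-- The set of short exact sequences `0 ⟶ N ⟶ L ⟶ M ⟶ 0` with fixed objects. -/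
def ExtW (M N L : C) : Type _ :=
  {p : (N ⟶ L) × (L ⟶ M) // IsSES p.1 p.2}

/-- Equivalence of extensions of `M` by `N` with middle term `L`. -/
def extRel (M N L : C) (p q : ExtW M N L) : Prop :=
  ∃ θ : L ≅ L, p.1.1 ≫ θ.hom = q.1.1 ∧ θ.hom ≫ q.1.2 = p.1.2

/-- `Ext¹(M,N)_L`: equivalence classes of extensions of `M` by `N` with middle term `L`. -/
def ExtClasses (M N L : C) := Quot (extRel M N L)

/-- The Hall structure constant `|Ext¹(M,N)_L| / |Hom(M,N)|`. -/
def hallCoeff (M N L : C) : ℚ :=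
  (Nat.card (ExtClasses M N L) : ℚ) / (Nat.card (M ⟶ N) : ℚ)

/-- Isomorphism classes of objects. -/
abbrev IsoCls (D : Type*) [Category D] := Quotient (isIsomorphicSetoid D)

/-- The underlying vector space of the Hall algebra of `C`. -/
abbrev HallAlg (D : Type*) [Category D] := IsoCls D →₀ ℚ

/-- Finiteness assumptions making the Hall multiplication well defined. -/
class HallFinitary (C : Type u) [Category.{v} C] [Abelian C] : Prop where
  homFinite : ∀ X Y : C, Finite (X ⟶ Y)
  suppFinite : ∀ M N : C, {κ : IsoCls C | hallCoeff M N (Quotient.out κ) ≠ 0}.Finite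

/-- The Hall product of two basis elements. -/
def hallMulBasis [HallFinitary C] (M N : C) : HallAlg C :=
  ⟨(HallFinitary.suppFinite M N).toFinset,
    fun κ => hallCoeff M N (Quotient.out κ), by
      intro κ
      simp [Set.Finite.mem_toFinset]⟩

/-- The multiplication of the Hall algebra of `C`. -/
def hallMul [HallFinitary C] (x y : HallAlg C) : HallAlg C :=
  x.sum fun κ a => y.sum fun κ' b => (a * b) • hallMulBasis κ.out κ'.out

/-!
Riedtmann's formula `hallCoeff M N L = |{0 → N → L → M → 0}| / |Aut L|` comes from the action of
`Aut L` on short exact sequences: its orbits are `Ext¹(M,N)_L`, and the stabiliser of `(f, g)`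
consists of the shears `1 + g h f`, one for each `h : M ⟶ N`.

With it, `|Aut X|` times the coefficient of `[X]` in `([M] ⋄ [N]) ⋄ [P]` counts pairs of a
monomorphism `P ⟶ X` and an extension of `M` by `N` on its cokernel, while in
`[M] ⋄ ([N] ⋄ [P])` it counts pairs of an epimorphism `X ⟶ M` and an extension of `N` by `P` on
its kernel. Both count the flags `P ⊆ U ⊆ X` with `U / P ≅ N` and `X / U ≅ M`, and the Noether
isomorphism `(X / P) / (U / P) ≅ X / U` matches them. For the unit: an extension with a zero end
term is an isomorphism between the other two.
-/

namespace IsSES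

variable {N L M : C} {f : N ⟶ L} {g : L ⟶ M}

lemma w (h : IsSES f g) : f ≫ g = 0 := h.fst

lemma shortExact (h : IsSES f g) : (ShortComplex.mk f g h.w).ShortExact := h.snd

lemma mono (h : IsSES f g) : Mono f := h.shortExact.mono_f

lemma epi (h : IsSES f g) : Epi g := h.shortExact.epi_g

def fIsKernel (h : IsSES f g) : IsLimit (KernelFork.ofι f h.w) := h.shortExact.fIsKernel

def gIsCokernel (h : IsSES f g) : IsColimit (CokernelCofork.ofπ g h.w) :=
  h.shortExact.gIsCokernel

lemma of_isLimit (w : f ≫ g = 0) [Epi g] (hf : IsLimit (KernelFork.ofι f w)) : IsSES f g :=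
  have : Mono f := mono_of_isLimit_fork hf
  ⟨w, { exact := (ShortComplex.mk f g w).exact_of_f_is_kernel hf }⟩

lemma of_isColimit (w : f ≫ g = 0) [Mono f] (hg : IsColimit (CokernelCofork.ofπ g w)) :
    IsSES f g :=
  have : Epi g := epi_of_isColimit_cofork hg
  ⟨w, { exact := (ShortComplex.mk f g w).exact_of_g_is_cokernel hg }⟩

lemma of_iso (h : IsSES f g) {N' L' M' : C} (α : N ≅ N') (β : L ≅ L') (γ : M ≅ M') :
    IsSES (α.inv ≫ f ≫ β.hom) (β.inv ≫ g ≫ γ.hom) :=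
  ⟨by simp [reassoc_of% h.w],
    ShortComplex.shortExact_of_iso (ShortComplex.isoMk α β γ (by simp) (by simp)) h.shortExact⟩

def cokernelIso (h : IsSES f g) : cokernel f ≅ M :=
  (cokernelIsCokernel f).coconePointUniqueUpToIso h.gIsCokernel

@[simp]
lemma π_cokernelIso_hom (h : IsSES f g) : cokernel.π f ≫ h.cokernelIso.hom = g :=
  (cokernelIsCokernel f).comp_coconePointUniqueUpToIso_hom h.gIsCokernel WalkingParallelPair.one

def kernelIso (h : IsSES f g) : N ≅ kernel g :=
  IsLimit.conePointUniqueUpToIso (t := KernelFork.ofι _ (kernel.condition g)) h.fIsKernel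
    (kernelIsKernel g)

@[simp]
lemma kernelIso_hom_ι (h : IsSES f g) : h.kernelIso.hom ≫ kernel.ι g = f :=
  h.fIsKernel.conePointUniqueUpToIso_hom_comp (kernelIsKernel g) WalkingParallelPair.zero

end IsSES

lemma isSES_cokernel_π {P X : C} (u : P ⟶ X) [Mono u] : IsSES u (cokernel.π u) :=
  .of_isColimit (cokernel.condition u) (cokernelIsCokernel u)

lemma isSES_kernel_ι {X M : C} (p : X ⟶ M) [Epi p] : IsSES (kernel.ι p) p :=
  .of_isLimit (kernel.condition p) (kernelIsKernel p)

lemma IsSES.of_isIso_of_isZero {N L Z : C} (f : N ⟶ L) [IsIso f] (hZ : IsZero Z) (g : L ⟶ Z) :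
    IsSES f g :=
  have := hZ.epi g
  ⟨hZ.eq_of_tgt _ _,
    { exact := (ShortComplex.exact_iff_epi _ (hZ.eq_of_tgt _ _)).2 inferInstance }⟩

lemma IsSES.of_isZero_of_isIso {Z L M : C} (hZ : IsZero Z) (f : Z ⟶ L) (g : L ⟶ M) [IsIso g] :
    IsSES f g :=
  have := hZ.mono f
  ⟨hZ.eq_of_src _ _,
    { exact := (ShortComplex.exact_iff_mono _ (hZ.eq_of_src _ _)).2 inferInstance }⟩

lemma MulAction.card_mul_eq_card_orbitRel_quotient_mul_card {G α : Type*} [Group G]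
    [MulAction G α] [Finite G] [Finite α] {n : ℕ}
    (hstab : ∀ a : α, Nat.card (MulAction.stabilizer G a) = n) :
    Nat.card α * n = Nat.card (MulAction.orbitRel.Quotient G α) * Nat.card G := by
  have := Fintype.ofFinite (MulAction.orbitRel.Quotient G α)
  rw [Nat.card_congr (MulAction.selfEquivSigmaOrbits G α), Nat.card_sigma, Finset.sum_mul,
    Nat.card_eq_fintype_card (α := MulAction.orbitRel.Quotient G α), ← smul_eq_mul,
    ← Finset.card_univ, ← Finset.sum_const]
  refine Finset.sum_congr rfl fun ω _ => ?_
  rw [← hstab ω.out, ← Nat.card_prod,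
    Nat.card_congr (MulAction.orbitProdStabilizerEquivGroup G ω.out)]

section IsoClasses

variable {D : Type*} [Category D]

instance Iso.finite {A B : D} [Finite (A ⟶ B)] : Finite (A ≅ B) :=
  Finite.of_injective Iso.hom fun _ _ h => Iso.ext h

instance Aut.finite {A : D} [Finite (A ⟶ A)] : Finite (Aut A) := Iso.finite

lemma IsoCls.mk_eq_mk_iff {A B : D} : (⟦A⟧ : IsoCls D) = ⟦B⟧ ↔ Nonempty (A ≅ B) :=
  Quotient.eq

def IsoCls.outIso (A : D) : (⟦A⟧ : IsoCls D).out ≅ A :=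
  (IsoCls.mk_eq_mk_iff.1 (Quotient.out_eq _)).some

lemma Nat.card_iso_eq_ite (A B : D) :
    Nat.card (A ≅ B) = if (⟦A⟧ : IsoCls D) = ⟦B⟧ then Nat.card (Aut B) else 0 := by
  split_ifs with h
  · obtain ⟨e⟩ := IsoCls.mk_eq_mk_iff.1 h
    exact Nat.card_congr ⟨fun i => e.symm ≪≫ i, fun θ => e ≪≫ θ, fun _ => by simp,
      fun θ => Iso.ext (e.inv_hom_id_assoc θ.hom)⟩
  · have : IsEmpty (A ≅ B) := ⟨fun e => h (IsoCls.mk_eq_mk_iff.2 ⟨e⟩)⟩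
    exact Nat.card_of_isEmpty

/-- Each `s` contributes only to the term of the class `L` of `c s`, where `|c s ≅ L| = |Aut L|`. -/
theorem sum_card_mul_card_sigma_iso_div_card_aut [∀ A B : D, Finite (A ⟶ B)]
    {S : Type*} [Finite S] (c : S → D) {E : D → Type*} [∀ A, Finite (E A)]
    (hE : ∀ {A B : D}, (A ≅ B) → (E A ≃ E B)) (T : Finset (IsoCls D))
    (hT : ∀ κ ∉ T, IsEmpty (E κ.out)) :
    ∑ κ ∈ T, (Nat.card (E κ.out) * Nat.card (Σ s, (c s ≅ κ.out)) / Nat.card (Aut κ.out) : ℚ) =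
      Nat.card (Σ s, E (c s)) := by
  have := Fintype.ofFinite S
  have hterm (κ : IsoCls D) :
      (Nat.card (E κ.out) * Nat.card (Σ s, (c s ≅ κ.out)) / Nat.card (Aut κ.out) : ℚ) =
        ∑ s, if ⟦c s⟧ = κ then (Nat.card (E (c s)) : ℚ) else 0 := by
    have hAut : (Nat.card (Aut κ.out) : ℚ) ≠ 0 := Nat.cast_ne_zero.2 Nat.card_pos.ne'
    simp only [Nat.card_sigma, Nat.card_iso_eq_ite, Quotient.out_eq, Nat.cast_sum,
      Finset.mul_sum, Finset.sum_div]
    refine Finset.sum_congr rfl fun s _ => ?_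
    split_ifs with h
    · obtain ⟨e⟩ := IsoCls.mk_eq_mk_iff.1 (h.trans (Quotient.out_eq κ).symm)
      rw [mul_div_cancel_right₀ _ hAut, Nat.card_congr (hE e)]
    · simp
  have hmem (s : S) : (⟦c s⟧ : IsoCls D) ∉ T → IsEmpty (E (c s)) := fun h =>
    (hE (IsoCls.outIso (c s))).isEmpty_congr.1 (hT _ h)
  simp_rw [hterm]
  rw [Finset.sum_comm, Nat.card_sigma, Nat.cast_sum]
  refine Finset.sum_congr rfl fun s _ => ?_
  rw [Finset.sum_ite_eq]
  split_ifs with h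
  · rfl
  · have := hmem s h
    simp

end IsoClasses

namespace ExtW

variable {M N L : C}

lemma ext_iff {p q : ExtW M N L} : p = q ↔ p.1.1 = q.1.1 ∧ p.1.2 = q.1.2 :=
  Subtype.ext_iff.trans Prod.ext_iff

def congrMid {L' : C} (e : L ≅ L') : ExtW M N L ≃ ExtW M N L' where
  toFun p := ⟨(p.1.1 ≫ e.hom, e.inv ≫ p.1.2), by
    simpa using p.2.of_iso (Iso.refl _) e (Iso.refl _)⟩
  invFun p := ⟨(p.1.1 ≫ e.inv, e.hom ≫ p.1.2), by
    simpa using p.2.of_iso (Iso.refl _) e.symm (Iso.refl _)⟩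
  left_inv p := ext_iff.2 ⟨by simp, by simp⟩
  right_inv p := ext_iff.2 ⟨by simp, by simp⟩

instance : SMul (Aut L) (ExtW M N L) where
  smul θ := congrMid θ

@[simp]
lemma smul_val (θ : Aut L) (p : ExtW M N L) :
    (θ • p).1 = (p.1.1 ≫ θ.hom, θ.inv ≫ p.1.2) := rfl

instance : MulAction (Aut L) (ExtW M N L) where
  one_smul _ := ext_iff.2 ⟨Category.comp_id _, Category.id_comp _⟩
  mul_smul _ _ _ := ext_iff.2 ⟨(Category.assoc _ _ _).symm, Category.assoc _ _ _⟩

lemma extRel_iff {p q : ExtW M N L} : extRel M N L p q ↔ ∃ θ : Aut L, θ • p = q := by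
  refine exists_congr fun θ => ?_
  rw [ext_iff]
  exact and_congr Iff.rfl (eq_comm.trans (Iso.inv_comp_eq θ).symm)

def extClassesEquivOrbits : ExtClasses M N L ≃ MulAction.orbitRel.Quotient (Aut L) (ExtW M N L) :=
  Quot.congrRight fun p q => by
    rw [extRel_iff, MulAction.orbitRel_apply, MulAction.mem_orbit_iff]
    exact ⟨fun ⟨θ, h⟩ => ⟨θ⁻¹, by rw [← h, inv_smul_smul]⟩,
      fun ⟨θ, h⟩ => ⟨θ⁻¹, by rw [← h, inv_smul_smul]⟩⟩

end ExtW

namespace IsSES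

variable {N L M : C} {f : N ⟶ L} {g : L ⟶ M}

/-- The automorphism `1 + g k f` of the middle term; it is invertible because `(g k f)² = 0`. -/
@[simps]
def shear (h : IsSES f g) (k : M ⟶ N) : Aut L where
  hom := 𝟙 L + g ≫ k ≫ f
  inv := 𝟙 L - g ≫ k ≫ f
  hom_inv_id := by simp [reassoc_of% h.w]
  inv_hom_id := by simp [reassoc_of% h.w]

lemma shear_injective (h : IsSES f g) : Function.Injective h.shear := by
  intro k₁ k₂ hk
  have := h.mono
  have := h.epi
  have h' : g ≫ k₁ ≫ f = g ≫ k₂ ≫ f := add_left_cancel (congrArg Iso.hom hk)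
  rwa [cancel_epi, cancel_mono] at h'

lemma exists_shear_eq (h : IsSES f g) (θ : Aut L) (hf : f ≫ θ.hom = f)
    (hg : θ.hom ≫ g = g) : ∃ k, h.shear k = θ := by
  have hf₀ : f ≫ (θ.hom - 𝟙 L) = 0 := by simp [hf]
  obtain ⟨t, ht : g ≫ t = θ.hom - 𝟙 L⟩ := CokernelCofork.IsColimit.desc' h.gIsCokernel _ hf₀
  have := h.epi
  have ht₀ : t ≫ g = 0 := by
    rw [← cancel_epi g, ← Category.assoc, ht]
    simp [hg]
  obtain ⟨k, hk : k ≫ f = t⟩ := KernelFork.IsLimit.lift' h.fIsKernel t ht₀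
  refine ⟨k, Aut.ext ?_⟩
  rw [shear_hom, hk, ht, add_sub_cancel]

end IsSES

namespace ExtW

variable {M N L : C}

lemma shear_smul (p : ExtW M N L) (k : M ⟶ N) : p.2.shear k • p = p :=
  ext_iff.2 ⟨by simp [reassoc_of% p.2.w], by simp [p.2.w]⟩

lemma card_stabilizer (p : ExtW M N L) :
    Nat.card (MulAction.stabilizer (Aut L) p) = Nat.card (M ⟶ N) := by
  refine (Nat.card_eq_of_bijective (fun k => ⟨p.2.shear k, shear_smul p k⟩) ⟨?_, ?_⟩).symm
  · exact fun k₁ k₂ hk => p.2.shear_injective (congrArg Subtype.val hk)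
  · rintro ⟨θ, hθ⟩
    obtain ⟨hf, hg⟩ := ext_iff.1 hθ
    obtain ⟨k, hk⟩ := p.2.exists_shear_eq θ hf ((Iso.inv_comp_eq θ).1 hg).symm
    exact ⟨k, Subtype.ext hk⟩

def equivSigmaCokernelIso (P X L : C) :
    ExtW L P X ≃ Σ u : {u : P ⟶ X // Mono u}, (cokernel u.1 ≅ L) where
  toFun p := ⟨⟨p.1.1, p.2.mono⟩, p.2.cokernelIso⟩
  invFun s := ⟨(s.1.1, cokernel.π s.1.1 ≫ s.2.hom), by
    have := s.1.2
    simpa using (isSES_cokernel_π s.1.1).of_iso (Iso.refl _) (Iso.refl _) s.2⟩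
  left_inv p := ext_iff.2 ⟨rfl, p.2.π_cokernelIso_hom⟩
  right_inv s := by
    refine Sigma.ext rfl (heq_of_eq (Iso.ext ?_))
    rw [← cancel_epi (cokernel.π s.1.1)]
    exact IsSES.π_cokernelIso_hom _

def equivSigmaKernelIso (M X L : C) :
    ExtW M L X ≃ Σ p : {p : X ⟶ M // Epi p}, (kernel p.1 ≅ L) where
  toFun q := ⟨⟨q.1.2, q.2.epi⟩, q.2.kernelIso.symm⟩
  invFun s := ⟨(s.2.inv ≫ kernel.ι s.1.1, s.1.1), by
    have := s.1.2
    simpa using (isSES_kernel_ι s.1.1).of_iso s.2 (Iso.refl _) (Iso.refl _)⟩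
  left_inv q := ext_iff.2 ⟨q.2.kernelIso_hom_ι, rfl⟩
  right_inv s := by
    refine Sigma.ext rfl (heq_of_eq ?_)
    rw [← Iso.symm_eq_iff, Iso.symm_symm_eq]
    refine Iso.ext ?_
    rw [← cancel_mono (kernel.ι s.1.1)]
    exact IsSES.kernelIso_hom_ι _

variable {Z : C}

def equivIsoOfIsZeroLeft (hZ : IsZero Z) : ExtW Z N L ≃ (N ≅ L) where
  toFun p := have := p.2.shortExact.isIso_f_iff.2 hZ; asIso p.1.1
  invFun e := ⟨(e.hom, 0), .of_isIso_of_isZero _ hZ _⟩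
  left_inv _ := ext_iff.2 ⟨rfl, hZ.eq_of_tgt _ _⟩
  right_inv _ := Iso.ext rfl

def equivIsoOfIsZeroRight (hZ : IsZero Z) : ExtW M Z L ≃ (M ≅ L) where
  toFun p := have := p.2.shortExact.isIso_g_iff.2 hZ; (asIso p.1.2).symm
  invFun e := ⟨(0, e.inv), .of_isZero_of_isIso hZ _ _⟩
  left_inv _ := ext_iff.2 ⟨hZ.eq_of_src _ _, rfl⟩
  right_inv _ := Iso.ext (by simp)

end ExtW

/-- Both `SubExt M N P X` and `QuotExt M N P X` parametrise the flags `P ⊆ U ⊆ X` with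
`U / P ≅ N` and `X / U ≅ M`, seen from the bottom step and from the top step respectively. -/
abbrev SubExt (M N P X : C) := Σ u : {u : P ⟶ X // Mono u}, ExtW M N (cokernel u.1)

abbrev QuotExt (M N P X : C) := Σ p : {p : X ⟶ M // Epi p}, ExtW N P (kernel p.1)

namespace SubExt

variable {M N P X : C} {u : P ⟶ X} {f : N ⟶ cokernel u} {g : cokernel u ⟶ M}

def toKer (u : P ⟶ X) (g : cokernel u ⟶ M) : P ⟶ kernel (cokernel.π u ≫ g) :=
  kernel.lift _ u (by simp)

@[simp]
lemma toKer_ι (u : P ⟶ X) (g : cokernel u ⟶ M) : toKer u g ≫ kernel.ι _ = u := kernel.lift_ι _ _ _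

def kerTo (hfg : IsSES f g) : kernel (cokernel.π u ≫ g) ⟶ N :=
  KernelFork.IsLimit.lift' hfg.fIsKernel (kernel.ι _ ≫ cokernel.π u) (by simp) |>.1

@[simp]
lemma kerTo_comp (hfg : IsSES f g) : kerTo hfg ≫ f = kernel.ι _ ≫ cokernel.π u :=
  (KernelFork.IsLimit.lift' hfg.fIsKernel _ _).2

lemma toKer_kerTo (hfg : IsSES f g) : toKer u g ≫ kerTo hfg = 0 := by
  have := hfg.mono
  rw [← cancel_mono f, Category.assoc, kerTo_comp, reassoc_of% toKer_ι u g, cokernel.condition,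
    zero_comp]

lemma epi_kerTo (hfg : IsSES f g) : Epi (kerTo hfg) := by
  have := hfg.mono
  let k : pullback f (cokernel.π u) ⟶ kernel (cokernel.π u ≫ g) :=
    kernel.lift _ (pullback.snd f _) (by simp [← pullback.condition_assoc, hfg.w])
  have hk : k ≫ kerTo hfg = pullback.fst f _ := by
    simp [← cancel_mono f, k, pullback.condition]
  have : Epi (k ≫ kerTo hfg) := by rw [hk]; infer_instance
  exact epi_of_epi k _

/-- A map into `U` killed by `U ⟶ N` dies in `X / P`, hence factors through `P`. -/
def toKerIsKernel [Mono u] (hfg : IsSES f g) :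
    IsLimit (KernelFork.ofι (toKer u g) (toKer_kerTo hfg)) :=
  have : Mono (toKer u g) := mono_of_mono_fac (toKer_ι u g)
  KernelFork.IsLimit.ofι' _ _ fun {A} k hk => by
    have hk' : (k ≫ kernel.ι _) ≫ cokernel.π u = 0 := by
      rw [Category.assoc, ← kerTo_comp hfg, reassoc_of% hk, zero_comp]
    obtain ⟨s, hs : s ≫ u = k ≫ kernel.ι _⟩ :=
      KernelFork.IsLimit.lift' (isSES_cokernel_π u).fIsKernel _ hk'
    exact ⟨s, by rw [← cancel_mono (kernel.ι _), Category.assoc, toKer_ι, hs]⟩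

lemma isSES_toKer_kerTo [Mono u] (hfg : IsSES f g) : IsSES (toKer u g) (kerTo hfg) :=
  have := epi_kerTo hfg
  .of_isLimit _ (toKerIsKernel hfg)

end SubExt

namespace QuotExt

variable {M N P X : C} {p : X ⟶ M} {a : P ⟶ kernel p} {b : kernel p ⟶ N}

def cokerTo (p : X ⟶ M) (a : P ⟶ kernel p) : cokernel (a ≫ kernel.ι p) ⟶ M :=
  cokernel.desc _ p (by simp)

@[simp]
lemma π_cokerTo (p : X ⟶ M) (a : P ⟶ kernel p) : cokernel.π _ ≫ cokerTo p a = p :=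
  cokernel.π_desc _ _ _

def toCoker (hab : IsSES a b) : N ⟶ cokernel (a ≫ kernel.ι p) :=
  CokernelCofork.IsColimit.desc' hab.gIsCokernel (kernel.ι p ≫ cokernel.π _)
    (by simp [← Category.assoc]) |>.1

@[simp]
lemma comp_toCoker (hab : IsSES a b) : b ≫ toCoker hab = kernel.ι p ≫ cokernel.π _ :=
  (CokernelCofork.IsColimit.desc' hab.gIsCokernel _ _).2

lemma toCoker_cokerTo (hab : IsSES a b) : toCoker hab ≫ cokerTo p a = 0 := by
  have := hab.epi
  rw [← cancel_epi b, reassoc_of% comp_toCoker hab, π_cokerTo, kernel.condition, comp_zero]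

lemma mono_toCoker (hab : IsSES a b) : Mono (toCoker hab) := by
  have := hab.epi
  let k : cokernel (a ≫ kernel.ι p) ⟶ pushout b (kernel.ι p) :=
    cokernel.desc _ (pushout.inr b _) (by simp [← pushout.condition, reassoc_of% hab.w])
  have hk : toCoker hab ≫ k = pushout.inl b _ := by
    simp [← cancel_epi b, k, pushout.condition, reassoc_of% comp_toCoker hab]
  have : Mono (toCoker hab ≫ k) := by rw [hk]; infer_instance
  exact mono_of_mono _ k

/-- A map out of `X / P` killing `N` kills `U`, so it factors through `X ⟶ M`. -/
def cokerToIsCokernel [Epi p] (hab : IsSES a b) :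
    IsColimit (CokernelCofork.ofπ (cokerTo p a) (toCoker_cokerTo hab)) :=
  have : Epi (cokerTo p a) := epi_of_epi_fac (π_cokerTo p a)
  CokernelCofork.IsColimit.ofπ' _ _ fun {A} k hk => by
    have hk' : kernel.ι p ≫ cokernel.π _ ≫ k = 0 := by
      rw [← reassoc_of% comp_toCoker hab, hk, comp_zero]
    obtain ⟨l, hl : p ≫ l = cokernel.π _ ≫ k⟩ :=
      CokernelCofork.IsColimit.desc' (isSES_kernel_ι p).gIsCokernel _ hk'
    exact ⟨l, by rw [← cancel_epi (cokernel.π _), reassoc_of% π_cokerTo p a, hl]⟩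

lemma isSES_toCoker_cokerTo [Epi p] (hab : IsSES a b) : IsSES (toCoker hab) (cokerTo p a) :=
  have := mono_toCoker hab
  .of_isColimit _ (cokerToIsCokernel hab)

end QuotExt

section Noether

variable {M N P X : C}

def SubExt.toQuotExt (x : SubExt M N P X) : QuotExt M N P X :=
  have := x.1.2
  have := x.2.2.epi
  ⟨⟨cokernel.π x.1.1 ≫ x.2.1.2, epi_comp _ _⟩,
    ⟨(SubExt.toKer x.1.1 x.2.1.2, SubExt.kerTo x.2.2), SubExt.isSES_toKer_kerTo x.2.2⟩⟩

def QuotExt.toSubExt (y : QuotExt M N P X) : SubExt M N P X :=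
  have := y.1.2
  have := y.2.2.mono
  ⟨⟨y.2.1.1 ≫ kernel.ι y.1.1, mono_comp _ _⟩,
    ⟨(QuotExt.toCoker y.2.2, QuotExt.cokerTo y.1.1 y.2.1.1), QuotExt.isSES_toCoker_cokerTo y.2.2⟩⟩

lemma SubExt.toQuotExt_injective : Function.Injective (toQuotExt : SubExt M N P X → _) := by
  rintro ⟨⟨u, hu⟩, ⟨⟨f, g⟩, hfg⟩⟩ ⟨⟨u', hu'⟩, ⟨⟨f', g'⟩, hfg'⟩⟩ h
  have hu : u = u' := by
    simpa [toQuotExt] using congrArg (fun y : QuotExt M N P X => y.2.1.1 ≫ kernel.ι y.1.1) h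
  subst hu
  have hg : g = g' := by
    simpa [toQuotExt, cancel_epi] using congrArg (fun y : QuotExt M N P X => y.1.1) h
  subst hg
  have hb : kerTo hfg = kerTo hfg' :=
    congrArg (fun q : ExtW _ _ _ => q.1.2) (eq_of_heq (Sigma.ext_iff.1 h).2)
  have hf : f = f' := by
    have := epi_kerTo hfg
    rw [← cancel_epi (kerTo hfg), kerTo_comp, hb, kerTo_comp]
  subst hf
  rfl

lemma QuotExt.toSubExt_injective : Function.Injective (toSubExt : QuotExt M N P X → _) := by
  rintro ⟨⟨p, hp⟩, ⟨⟨a, b⟩, hab⟩⟩ ⟨⟨p', hp'⟩, ⟨⟨a', b'⟩, hab'⟩⟩ h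
  have hp : p = p' := by
    simpa [toSubExt] using congrArg (fun x : SubExt M N P X => cokernel.π x.1.1 ≫ x.2.1.2) h
  subst hp
  have ha : a = a' := by
    simpa [toSubExt, cancel_mono] using congrArg (fun x : SubExt M N P X => x.1.1) h
  subst ha
  have hf : toCoker hab = toCoker hab' :=
    congrArg (fun q : ExtW _ _ _ => q.1.1) (eq_of_heq (Sigma.ext_iff.1 h).2)
  have hb : b = b' := by
    have := mono_toCoker hab
    rw [← cancel_mono (toCoker hab), comp_toCoker, hf, comp_toCoker]
  subst hb
  rfl

end Noether

section Finitary

variable [HallFinitary C]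

instance HallFinitary.finiteHom (X Y : C) : Finite (X ⟶ Y) := HallFinitary.homFinite X Y

instance ExtW.finite {M N L : C} : Finite (ExtW M N L) := Subtype.finite

/-- Riedtmann's formula. -/
theorem hallCoeff_eq_card_extW_div_card_aut (M N L : C) :
    hallCoeff M N L = Nat.card (ExtW M N L) / Nat.card (Aut L) := by
  have key := MulAction.card_mul_eq_card_orbitRel_quotient_mul_card
    (G := Aut L) (α := ExtW M N L) ExtW.card_stabilizer
  rw [← Nat.card_congr ExtW.extClassesEquivOrbits] at key
  rw [hallCoeff, div_eq_div_iff (Nat.cast_ne_zero.2 Nat.card_pos.ne')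
    (Nat.cast_ne_zero.2 Nat.card_pos.ne')]
  exact_mod_cast key.symm

lemma isEmpty_extW_of_hallCoeff_eq_zero {M N L : C} (h : hallCoeff M N L = 0) :
    IsEmpty (ExtW M N L) := by
  rw [hallCoeff_eq_card_extW_div_card_aut, div_eq_zero_iff, Nat.cast_eq_zero,
    Nat.cast_eq_zero] at h
  exact Finite.card_eq_zero_iff.1 (h.resolve_right Nat.card_pos.ne')

lemma card_subExt_eq_card_quotExt (M N P X : C) :
    Nat.card (SubExt M N P X) = Nat.card (QuotExt M N P X) :=
  le_antisymm (Nat.card_le_card_of_injective _ SubExt.toQuotExt_injective)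
    (Nat.card_le_card_of_injective _ QuotExt.toSubExt_injective)

lemma isEmpty_extW_of_notMem_supp {M N : C} {κ : IsoCls C}
    (h : κ ∉ (HallFinitary.suppFinite M N).toFinset) : IsEmpty (ExtW M N κ.out) :=
  isEmpty_extW_of_hallCoeff_eq_zero (by simpa using h)

theorem sum_hallCoeff_mul_hallCoeff_eq_card_subExt (M N P X : C) :
    ∑ κ ∈ (HallFinitary.suppFinite M N).toFinset, hallCoeff M N κ.out * hallCoeff κ.out P X =
      Nat.card (SubExt M N P X) / Nat.card (Aut X) := by
  rw [← sum_card_mul_card_sigma_iso_div_card_aut (fun u : {u : P ⟶ X // Mono u} => cokernel u.1)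
    ExtW.congrMid _ fun κ => isEmpty_extW_of_notMem_supp, Finset.sum_div]
  refine Finset.sum_congr rfl fun κ _ => ?_
  rw [hallCoeff_eq_card_extW_div_card_aut, hallCoeff_eq_card_extW_div_card_aut,
    ← Nat.card_congr (ExtW.equivSigmaCokernelIso P X κ.out)]
  ring

theorem sum_hallCoeff_mul_hallCoeff_eq_card_quotExt (M N P X : C) :
    ∑ κ ∈ (HallFinitary.suppFinite N P).toFinset, hallCoeff N P κ.out * hallCoeff M κ.out X =
      Nat.card (QuotExt M N P X) / Nat.card (Aut X) := by
  rw [← sum_card_mul_card_sigma_iso_div_card_aut (fun p : {p : X ⟶ M // Epi p} => kernel p.1)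
    ExtW.congrMid _ fun κ => isEmpty_extW_of_notMem_supp, Finset.sum_div]
  refine Finset.sum_congr rfl fun κ _ => ?_
  rw [hallCoeff_eq_card_extW_div_card_aut, hallCoeff_eq_card_extW_div_card_aut,
    ← Nat.card_congr (ExtW.equivSigmaKernelIso M X κ.out)]
  ring

theorem sum_hallCoeff_mul_hallCoeff_comm (M N P X : C) :
    ∑ κ ∈ (HallFinitary.suppFinite M N).toFinset, hallCoeff M N κ.out * hallCoeff κ.out P X =
      ∑ κ ∈ (HallFinitary.suppFinite N P).toFinset, hallCoeff N P κ.out * hallCoeff M κ.out X := by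
  rw [sum_hallCoeff_mul_hallCoeff_eq_card_subExt, sum_hallCoeff_mul_hallCoeff_eq_card_quotExt,
    card_subExt_eq_card_quotExt]

lemma hallMulBasis_apply (M N : C) (κ : IsoCls C) : hallMulBasis M N κ = hallCoeff M N κ.out :=
  rfl

lemma hallMul_single_left (κ : IsoCls C) (a : ℚ) (y : HallAlg C) :
    hallMul (Finsupp.single κ a) y = y.sum fun κ' b => (a * b) • hallMulBasis κ.out κ'.out :=
  Finsupp.sum_single_index (by simp)

lemma hallMul_single_right (x : HallAlg C) (κ : IsoCls C) (b : ℚ) :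
    hallMul x (Finsupp.single κ b) = x.sum fun κ' a => (a * b) • hallMulBasis κ'.out κ.out :=
  Finsupp.sum_congr fun _ _ => Finsupp.sum_single_index (by simp)

lemma hallMul_single_single (α β : IsoCls C) (a b : ℚ) :
    hallMul (Finsupp.single α a) (Finsupp.single β b) = (a * b) • hallMulBasis α.out β.out := by
  rw [hallMul_single_left]
  exact Finsupp.sum_single_index (by simp)

lemma zero_hallMul (y : HallAlg C) : hallMul 0 y = 0 :=
  Finsupp.sum_zero_index

lemma hallMul_zero (x : HallAlg C) : hallMul x 0 = 0 := by
  simp [hallMul]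

lemma add_hallMul (x₁ x₂ y : HallAlg C) :
    hallMul (x₁ + x₂) y = hallMul x₁ y + hallMul x₂ y := by
  refine Finsupp.sum_add_index' (fun _ => by simp) fun κ a₁ a₂ => ?_
  rw [← Finsupp.sum_add]
  exact Finsupp.sum_congr fun _ _ => by rw [add_mul, add_smul]

lemma hallMul_add (x y₁ y₂ : HallAlg C) :
    hallMul x (y₁ + y₂) = hallMul x y₁ + hallMul x y₂ := by
  rw [hallMul, hallMul, hallMul, ← Finsupp.sum_add]
  exact Finsupp.sum_congr fun _ _ =>
    Finsupp.sum_add_index' (fun _ => by simp) fun _ _ _ => by rw [mul_add, add_smul]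

lemma smul_hallMul (c : ℚ) (x y : HallAlg C) : hallMul (c • x) y = c • hallMul x y := by
  rw [hallMul, hallMul, Finsupp.sum_smul_index (fun _ => by simp), Finsupp.smul_sum]
  refine Finsupp.sum_congr fun _ _ => ?_
  rw [Finsupp.smul_sum]
  exact Finsupp.sum_congr fun _ _ => by rw [smul_smul, mul_assoc]

lemma hallMul_smul (c : ℚ) (x y : HallAlg C) : hallMul x (c • y) = c • hallMul x y := by
  rw [hallMul, hallMul, Finsupp.smul_sum]
  refine Finsupp.sum_congr fun _ _ => ?_
  rw [Finsupp.sum_smul_index (fun _ => by simp), Finsupp.smul_sum]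
  exact Finsupp.sum_congr fun _ _ => by rw [smul_smul, mul_left_comm]

lemma hallMul_hallMulBasis_single (α β γ : IsoCls C) :
    hallMul (hallMulBasis α.out β.out) (Finsupp.single γ 1) =
      hallMul (Finsupp.single α 1) (hallMulBasis β.out γ.out) := by
  ext ξ
  rw [hallMul_single_right, hallMul_single_left, Finsupp.sum_apply, Finsupp.sum_apply,
    Finsupp.sum, Finsupp.sum]
  simp only [Finsupp.smul_apply, smul_eq_mul, mul_one, one_mul, hallMulBasis_apply]
  exact sum_hallCoeff_mul_hallCoeff_comm _ _ _ _

lemma hallMul_assoc_single (α β γ : IsoCls C) (a b c : ℚ) :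
    hallMul (hallMul (Finsupp.single α a) (Finsupp.single β b)) (Finsupp.single γ c) =
      hallMul (Finsupp.single α a) (hallMul (Finsupp.single β b) (Finsupp.single γ c)) := by
  have hα : Finsupp.single α a = a • Finsupp.single α (1 : ℚ) := by simp
  have hγ : Finsupp.single γ c = c • Finsupp.single γ (1 : ℚ) := by simp
  rw [hallMul_single_single, hallMul_single_single, smul_hallMul, hallMul_smul, hα, hγ,
    smul_hallMul, hallMul_smul, hallMul_hallMulBasis_single, smul_smul, smul_smul]
  ring_nf

theorem hallMul_assoc (x y z : HallAlg C) :
    hallMul (hallMul x y) z = hallMul x (hallMul y z) := by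
  induction x using Finsupp.induction_linear with
  | zero => simp [zero_hallMul]
  | add x₁ x₂ h₁ h₂ => simp [add_hallMul, h₁, h₂]
  | single α a =>
    induction y using Finsupp.induction_linear with
    | zero => simp [zero_hallMul, hallMul_zero]
    | add y₁ y₂ h₁ h₂ => simp [add_hallMul, hallMul_add, h₁, h₂]
    | single β b =>
      induction z using Finsupp.induction_linear with
      | zero => simp [hallMul_zero]
      | add z₁ z₂ h₁ h₂ => simp [hallMul_add, h₁, h₂]
      | single γ c => exact hallMul_assoc_single α β γ a b c

lemma hallMulBasis_eq_single_of_equiv {M N : C} (A : C) (e : ∀ L, ExtW M N L ≃ (A ≅ L)) :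
    hallMulBasis M N = Finsupp.single ⟦A⟧ 1 := by
  ext κ
  rw [hallMulBasis_apply, hallCoeff_eq_card_extW_div_card_aut, Nat.card_congr (e _),
    Nat.card_iso_eq_ite, Quotient.out_eq, Finsupp.single_apply]
  split_ifs
  · exact div_self (Nat.cast_ne_zero.2 Nat.card_pos.ne')
  · simp

lemma single_hallMul {Z : C} (hZ : IsZero Z) (x : HallAlg C) :
    hallMul (Finsupp.single ⟦Z⟧ 1) x = x := by
  have hZ' := hZ.of_iso (IsoCls.outIso Z)
  rw [hallMul_single_left]
  conv_rhs => rw [← Finsupp.sum_single x]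
  refine Finsupp.sum_congr fun κ _ => ?_
  rw [hallMulBasis_eq_single_of_equiv _ fun _ => ExtW.equivIsoOfIsZeroLeft hZ', Quotient.out_eq,
    Finsupp.smul_single, one_mul, smul_eq_mul, mul_one]

lemma hallMul_single {Z : C} (hZ : IsZero Z) (x : HallAlg C) :
    hallMul x (Finsupp.single ⟦Z⟧ 1) = x := by
  have hZ' := hZ.of_iso (IsoCls.outIso Z)
  rw [hallMul_single_right]
  conv_rhs => rw [← Finsupp.sum_single x]
  refine Finsupp.sum_congr fun κ _ => ?_
  rw [hallMulBasis_eq_single_of_equiv _ fun _ => ExtW.equivIsoOfIsZeroRight hZ', Quotient.out_eq,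
    Finsupp.smul_single, mul_one, smul_eq_mul, mul_one]

end Finitary

/-- **The Hall algebra is associative with unit `[0]`.** -/
theorem hallMul_assoc_and_unit [HallFinitary C] :
    (∀ x y z : HallAlg C, hallMul (hallMul x y) z = hallMul x (hallMul y z)) ∧
    (∀ (Z : C), IsZero Z →
      (∀ x : HallAlg C, hallMul (Finsupp.single ⟦Z⟧ (1 : ℚ)) x = x) ∧
      (∀ x : HallAlg C, hallMul x (Finsupp.single ⟦Z⟧ (1 : ℚ)) = x)) :=
  ⟨hallMul_assoc, fun _ hZ => ⟨single_hallMul hZ, hallMul_single hZ⟩⟩
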